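/- arXiv:1405.5195 — 3 statements merged into one kernel-verified Lean document; each statement's English description precedes it below -/
import Mathlib

section
/- For every δ ∈ [0, 1/2], the function f(u) = h2(δ ⋆ h2⁻¹(u)) is convex on the interval [0, 1]. -/
open MeasureTheory

/-- Binary entropy function (base 2), with the convention `0 * log₂ 0 = 0`
(automatic since `Real.logb 2 0 = 0`). -/
noncomputable def h2 (p : ℝ) : ℝ :=
  -(p * Real.logb 2 p) - (1 - p) * Real.logb 2 (1 - p)

/-- Inverse of the binary entropy function: for `q ≥ 0`, the unique `r ∈ [0, 1/2]`
with `h2 r = q` (realized as the infimum of the solution set); `0` for `q < 0`. -/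
noncomputable def h2inv (q : ℝ) : ℝ :=
  if q < 0 then 0 else sInf {r : ℝ | 0 ≤ r ∧ r ≤ 1 / 2 ∧ h2 r = q}

/-- Binary convolution `a ⋆ b = a(1-b) + (1-a)b`. -/
def bconv (a b : ℝ) : ℝ := a * (1 - b) + (1 - a) * b

/-!
Write `p = h2⁻¹(u)` and `q = δ ⋆ p = δ + (1 - 2δ) p`. Since `h2' = L / log 2` with
`L(x) = log ((1 - x) / x)`, the chain rule gives `f'(u) = (1 - 2δ) L(q) / L(p)`, so it suffices
that this ratio increases with `p ∈ (0, 1/2)`. Its derivative has the sign of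
`G(q) - (1 - 2δ) G(p)` for `G(x) = x (1 - x) L(x)`, which is nonnegative because `G` is concave on
`(0, 1/2]`, vanishes at `1/2`, and `q = (1 - 2δ) p + 2δ · 1/2`.
-/

open Real Set

lemma h2_eq_binEntropy_div (p : ℝ) : h2 p = binEntropy p / log 2 := by
  simp only [h2, binEntropy, logb, log_inv]
  ring

lemma h2_zero : h2 0 = 0 := by simp [h2_eq_binEntropy_div]

lemma h2_one_half : h2 (1 / 2) = 1 := by
  rw [h2_eq_binEntropy_div, one_div, binEntropy_two_inv, div_self (log_pos one_lt_two).ne']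

lemma continuous_h2 : Continuous h2 := by
  simp only [funext h2_eq_binEntropy_div]
  exact binEntropy_continuous.div_const _

lemma h2_strictMonoOn : StrictMonoOn h2 (Icc 0 (1 / 2)) := by
  intro x hx y hy hxy
  simp only [h2_eq_binEntropy_div, div_lt_div_iff_of_pos_right (log_pos one_lt_two)]
  rw [one_div] at hx hy
  exact binEntropy_strictMonoOn hx hy hxy

lemma h2_bijOn : BijOn h2 (Icc 0 (1 / 2)) (Icc 0 1) := by
  refine ⟨fun p hp => ?_, h2_strictMonoOn.injOn, fun u hu => ?_⟩
  · rw [← h2_zero, ← h2_one_half]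
    exact ⟨h2_strictMonoOn.monotoneOn (by norm_num) hp hp.1,
      h2_strictMonoOn.monotoneOn hp (by norm_num) hp.2⟩
  · have := intermediate_value_Icc (by norm_num : (0 : ℝ) ≤ 1 / 2) continuous_h2.continuousOn
    rw [h2_zero, h2_one_half] at this
    exact this hu

noncomputable def h2OrderIso : Icc (0 : ℝ) (1 / 2) ≃o Icc (0 : ℝ) 1 :=
  (h2_strictMonoOn.orderIso _ _).trans <| OrderIso.setCongr _ _ h2_bijOn.image_eq

lemma h2inv_eq_h2OrderIso_symm (u : Icc (0 : ℝ) 1) : h2inv u = h2OrderIso.symm u := by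
  set p := h2OrderIso.symm u
  have hpu : h2 p = u := congrArg Subtype.val (h2OrderIso.apply_symm_apply u)
  have hsolutions : {r : ℝ | 0 ≤ r ∧ r ≤ 1 / 2 ∧ h2 r = u} = {(p : ℝ)} := by
    ext r
    refine ⟨fun ⟨hr₀, hr₁, hru⟩ => h2_strictMonoOn.injOn ⟨hr₀, hr₁⟩ p.2 (hru.trans hpu.symm), ?_⟩
    rintro rfl
    exact ⟨p.2.1, p.2.2, hpu⟩
  rw [h2inv, if_neg (not_lt.2 u.2.1), hsolutions, csInf_singleton]

lemma h2inv_mem_Icc {u : ℝ} (hu : u ∈ Icc (0 : ℝ) 1) : h2inv u ∈ Icc (0 : ℝ) (1 / 2) := by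
  rw [h2inv_eq_h2OrderIso_symm ⟨u, hu⟩]
  exact Subtype.prop _

lemma h2_h2inv {u : ℝ} (hu : u ∈ Icc (0 : ℝ) 1) : h2 (h2inv u) = u := by
  rw [h2inv_eq_h2OrderIso_symm ⟨u, hu⟩]
  exact congrArg Subtype.val (h2OrderIso.apply_symm_apply ⟨u, hu⟩)

lemma continuousOn_h2inv : ContinuousOn h2inv (Icc 0 1) := by
  rw [continuousOn_iff_continuous_domRestrict]
  have : (Icc (0 : ℝ) 1).domRestrict h2inv = fun u => (h2OrderIso.symm u : ℝ) :=
    funext h2inv_eq_h2OrderIso_symm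
  rw [this]
  exact continuous_subtype_val.comp h2OrderIso.symm.continuous

lemma monotoneOn_h2inv : MonotoneOn h2inv (Icc 0 1) := by
  intro u hu v hv huv
  rw [h2inv_eq_h2OrderIso_symm ⟨u, hu⟩, h2inv_eq_h2OrderIso_symm ⟨v, hv⟩]
  exact h2OrderIso.symm.monotone (Subtype.mk_le_mk.2 huv)

lemma h2inv_mem_Ioo {u : ℝ} (hu : u ∈ Ioo (0 : ℝ) 1) : h2inv u ∈ Ioo (0 : ℝ) (1 / 2) := by
  have hu' := Ioo_subset_Icc_self hu
  obtain ⟨hp₀, hp₁⟩ := h2inv_mem_Icc hu'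
  have hpu := h2_h2inv hu'
  refine ⟨hp₀.lt_of_ne ?_, hp₁.lt_of_ne ?_⟩ <;> intro hp
  · rw [← hp, h2_zero] at hpu
    exact hu.1.ne hpu
  · rw [hp, h2_one_half] at hpu
    exact hu.2.ne' hpu

noncomputable def entropySlope (x : ℝ) : ℝ := log (1 - x) - log x

lemma hasDerivAt_h2 {p : ℝ} (hp₀ : p ≠ 0) (hp₁ : p ≠ 1) :
    HasDerivAt h2 (entropySlope p / log 2) p := by
  simp only [funext h2_eq_binEntropy_div]
  exact (hasDerivAt_binEntropy hp₀ hp₁).div_const _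

lemma hasDerivAt_entropySlope {x : ℝ} (hx₀ : x ≠ 0) (hx₁ : x ≠ 1) :
    HasDerivAt entropySlope (-(x * (1 - x))⁻¹) x := by
  have hx₁' : 1 - x ≠ 0 := sub_ne_zero.2 hx₁.symm
  have h : HasDerivAt entropySlope (-1 / (1 - x) - x⁻¹) x :=
    (((hasDerivAt_id' x).const_sub 1).log hx₁').sub (hasDerivAt_log hx₀)
  refine h.congr_deriv ?_
  field_simp
  ring

lemma entropySlope_pos {x : ℝ} (hx : x ∈ Ioo (0 : ℝ) (1 / 2)) : 0 < entropySlope x :=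
  sub_pos.2 (log_lt_log hx.1 (by linarith [hx.2]))

lemma entropySlope_antitoneOn : AntitoneOn entropySlope (Ioo 0 1) := by
  intro x hx y hy hxy
  have h₁ : log (1 - y) ≤ log (1 - x) := log_le_log (by linarith [hy.2]) (by linarith)
  have h₂ : log x ≤ log y := log_le_log hx.1 hxy
  simp only [entropySlope]
  linarith

lemma hasDerivAt_h2inv {u : ℝ} (hu : u ∈ Ioo (0 : ℝ) 1) :
    HasDerivAt h2inv (log 2 / entropySlope (h2inv u)) u := by
  obtain ⟨hp₀, hp₁⟩ := h2inv_mem_Ioo hu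
  have hcont : ContinuousAt h2inv u :=
    continuousOn_h2inv.continuousAt (Icc_mem_nhds hu.1 hu.2)
  have hleft : ∀ᶠ v in nhds u, h2 (h2inv v) = v := by
    filter_upwards [Ioo_mem_nhds hu.1 hu.2] with v hv
    exact h2_h2inv (Ioo_subset_Icc_self hv)
  have hderiv_ne : entropySlope (h2inv u) / log 2 ≠ 0 :=
    div_ne_zero (entropySlope_pos ⟨hp₀, hp₁⟩).ne' (log_pos one_lt_two).ne'
  simpa only [inv_div] using HasDerivAt.of_local_left_inverse hcont
    (hasDerivAt_h2 hp₀.ne' (by linarith)) hderiv_ne hleft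

noncomputable def weightedSlope (x : ℝ) : ℝ := x * (1 - x) * entropySlope x

lemma hasDerivAt_weightedSlope {x : ℝ} (hx : x ∈ Ioo (0 : ℝ) 1) :
    HasDerivAt weightedSlope ((1 - 2 * x) * entropySlope x - 1) x := by
  have hx₀ : x ≠ 0 := hx.1.ne'
  have hx₁ : 1 - x ≠ 0 := by linarith [hx.2]
  have hpoly : HasDerivAt (fun y => y * (1 - y)) (1 * (1 - x) + x * -1) x :=
    (hasDerivAt_id' x).mul ((hasDerivAt_id' x).const_sub 1)
  have h : HasDerivAt weightedSlope
      ((1 * (1 - x) + x * -1) * entropySlope x + x * (1 - x) * -(x * (1 - x))⁻¹) x :=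
    hpoly.mul (hasDerivAt_entropySlope hx₀ (by linarith [hx.2]))
  refine h.congr_deriv ?_
  field_simp
  ring

lemma weightedSlope_one_half : weightedSlope (1 / 2) = 0 := by
  norm_num [weightedSlope, entropySlope]

lemma concaveOn_weightedSlope : ConcaveOn ℝ (Ioc 0 (1 / 2)) weightedSlope := by
  have hderiv : ∀ x ∈ Ioo (0 : ℝ) 1, HasDerivAt weightedSlope _ x :=
    fun x hx => hasDerivAt_weightedSlope hx
  have hsub : Ioc (0 : ℝ) (1 / 2) ⊆ Ioo 0 1 := Ioc_subset_Ioo_right (by norm_num)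
  refine AntitoneOn.concaveOn_of_deriv (convex_Ioc _ _)
    (fun x hx => (hderiv x (hsub hx)).continuousAt.continuousWithinAt) ?_ ?_ <;>
    rw [interior_Ioc]
  · exact fun x hx =>
      (hderiv x (hsub (Ioo_subset_Ioc_self hx))).differentiableAt.differentiableWithinAt
  · intro x hx y hy hxy
    have hx' := hsub (Ioo_subset_Ioc_self hx)
    have hy' := hsub (Ioo_subset_Ioc_self hy)
    rw [(hderiv x hx').deriv, (hderiv y hy').deriv]
    have hslope : entropySlope y ≤ entropySlope x := entropySlope_antitoneOn hx' hy' hxy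
    have := mul_le_mul (by linarith : 1 - 2 * y ≤ 1 - 2 * x) hslope (entropySlope_pos hy).le
      (by linarith [hx.2])
    linarith

lemma bconv_eq_add_mul (a b : ℝ) : bconv a b = a + (1 - 2 * a) * b := by
  rw [bconv]
  ring

lemma bconv_mem_Ioc {δ p : ℝ} (hδ : δ ∈ Icc (0 : ℝ) (1 / 2)) (hp : p ∈ Ioc (0 : ℝ) (1 / 2)) :
    bconv δ p ∈ Ioc (0 : ℝ) (1 / 2) := by
  obtain ⟨hδ₀, hδ₁⟩ := hδ
  obtain ⟨hp₀, hp₁⟩ := hp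
  rw [bconv_eq_add_mul]
  constructor <;> nlinarith

lemma mul_weightedSlope_le_weightedSlope_bconv {δ p : ℝ} (hδ : δ ∈ Icc (0 : ℝ) (1 / 2))
    (hp : p ∈ Ioc (0 : ℝ) (1 / 2)) :
    (1 - 2 * δ) * weightedSlope p ≤ weightedSlope (bconv δ p) := by
  have h := concaveOn_weightedSlope.2 hp (right_mem_Ioc.2 (by norm_num : (0 : ℝ) < 1 / 2))
    (by linarith [hδ.2] : 0 ≤ 1 - 2 * δ) (by linarith [hδ.1] : 0 ≤ 2 * δ) (by ring)
  simp only [smul_eq_mul, weightedSlope_one_half, mul_zero, add_zero] at h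
  have hcomb : (1 - 2 * δ) * p + 2 * δ * (1 / 2) = bconv δ p := by
    rw [bconv_eq_add_mul]
    ring
  rwa [hcomb] at h

lemma hasDerivAt_bconv (a b : ℝ) : HasDerivAt (bconv a) (1 - 2 * a) b := by
  rw [show bconv a = fun b => a + (1 - 2 * a) * b from funext (bconv_eq_add_mul a)]
  simpa using ((hasDerivAt_id' b).const_mul (1 - 2 * a)).const_add a

noncomputable def slopeRatio (δ p : ℝ) : ℝ :=
  (1 - 2 * δ) * (entropySlope (bconv δ p) / entropySlope p)

lemma hasDerivAt_slopeRatio {δ p : ℝ} (hδ : δ ∈ Icc (0 : ℝ) (1 / 2))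
    (hp : p ∈ Ioo (0 : ℝ) (1 / 2)) :
    HasDerivAt (slopeRatio δ)
      ((1 - 2 * δ) * ((weightedSlope (bconv δ p) - (1 - 2 * δ) * weightedSlope p) /
        (p * (1 - p) * (bconv δ p * (1 - bconv δ p)) * entropySlope p ^ 2))) p := by
  obtain ⟨hq₀, hq₁⟩ := bconv_mem_Ioc hδ (Ioo_subset_Ioc_self hp)
  have hp₀ : p ≠ 0 := hp.1.ne'
  have hp₁ : 1 - p ≠ 0 := by linarith [hp.2]
  have hq₀' : bconv δ p ≠ 0 := hq₀.ne'
  have hq₁' : 1 - bconv δ p ≠ 0 := by linarith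
  have hL : entropySlope p ≠ 0 := (entropySlope_pos hp).ne'
  have hnum := (hasDerivAt_entropySlope hq₀' (by linarith)).comp p (hasDerivAt_bconv δ p)
  have h : HasDerivAt (slopeRatio δ) _ p :=
    (hnum.div (hasDerivAt_entropySlope hp₀ (by linarith [hp.2])) hL).const_mul (1 - 2 * δ)
  refine h.congr_deriv ?_
  simp only [weightedSlope, Function.comp_apply]
  field_simp
  ring

lemma monotoneOn_slopeRatio {δ : ℝ} (hδ : δ ∈ Icc (0 : ℝ) (1 / 2)) :
    MonotoneOn (slopeRatio δ) (Ioo 0 (1 / 2)) := by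
  refine monotoneOn_of_deriv_nonneg (convex_Ioo _ _)
    (fun p hp => (hasDerivAt_slopeRatio hδ hp).continuousAt.continuousWithinAt) ?_ ?_ <;>
    rw [interior_Ioo]
  · exact fun p hp => (hasDerivAt_slopeRatio hδ hp).differentiableAt.differentiableWithinAt
  · intro p hp
    obtain ⟨hq₀, hq₁⟩ := bconv_mem_Ioc hδ (Ioo_subset_Ioc_self hp)
    rw [(hasDerivAt_slopeRatio hδ hp).deriv]
    refine mul_nonneg (by linarith [hδ.2]) (div_nonneg ?_ ?_)
    · exact sub_nonneg.2 (mul_weightedSlope_le_weightedSlope_bconv hδ (Ioo_subset_Ioc_self hp))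
    · have hA : 0 < p * (1 - p) := mul_pos hp.1 (by linarith [hp.2])
      have hB : 0 < bconv δ p * (1 - bconv δ p) := mul_pos hq₀ (by linarith)
      exact mul_nonneg (mul_pos hA hB).le (sq_nonneg _)

lemma hasDerivAt_h2_bconv_h2inv {δ u : ℝ} (hδ : δ ∈ Icc (0 : ℝ) (1 / 2))
    (hu : u ∈ Ioo (0 : ℝ) 1) :
    HasDerivAt (fun u => h2 (bconv δ (h2inv u))) (slopeRatio δ (h2inv u)) u := by
  have hp := h2inv_mem_Ioo hu
  obtain ⟨hq₀, hq₁⟩ := bconv_mem_Ioc hδ (Ioo_subset_Ioc_self hp)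
  have h := (hasDerivAt_h2 hq₀.ne' (by linarith)).comp u
    ((hasDerivAt_bconv δ _).comp u (hasDerivAt_h2inv hu))
  refine h.congr_deriv ?_
  have hL : entropySlope (h2inv u) ≠ 0 := (entropySlope_pos hp).ne'
  have hlog : log 2 ≠ 0 := (log_pos one_lt_two).ne'
  rw [slopeRatio]
  field_simp

/-- For every `δ ∈ [0, 1/2]`, the function `f(u) = h2(δ ⋆ h2⁻¹(u))` is convex on `[0, 1]`. -/
theorem stmt0 (δ : ℝ) (hδ : δ ∈ Set.Icc (0 : ℝ) (1 / 2)) :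
    ConvexOn ℝ (Set.Icc (0 : ℝ) 1) (fun u => h2 (bconv δ (h2inv u))) := by
  have hderiv := fun u (hu : u ∈ Ioo (0 : ℝ) 1) => hasDerivAt_h2_bconv_h2inv hδ hu
  refine MonotoneOn.convexOn_of_deriv (convex_Icc 0 1) ?_ ?_ ?_
  · have hbconv : Continuous (bconv δ) :=
      continuous_iff_continuousAt.2 fun b => (hasDerivAt_bconv δ b).continuousAt
    exact (continuous_h2.comp hbconv).comp_continuousOn continuousOn_h2inv
  · rw [interior_Icc]
    exact fun u hu => (hderiv u hu).differentiableAt.differentiableWithinAt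
  · rw [interior_Icc]
    intro u hu v hv huv
    rw [(hderiv u hu).deriv, (hderiv v hv).deriv]
    exact monotoneOn_slopeRatio hδ (h2inv_mem_Ioo hu) (h2inv_mem_Ioo hv)
      (monotoneOn_h2inv (Ioo_subset_Icc_self hu) (Ioo_subset_Icc_self hv) huv)
end

section
/- Let P > 0, R1 ≥ 0 and ρ ∈ [0, 1), and define, for α ∈ [0, 1], G(α) = 2^{2R1}·(1+P)·(1−ρ² + (1−α)P) / ( (1−ρ²)·2^{2R1}·(1 + (1−α)P) + (1−α)·P·(1+P) ). Then the denominator of G is strictly positive on [0, 1]; if ρ² ≥ 2^{−2R1}·(P+1) then G is monotonically nonincreasing on [0, 1], and if ρ² < 2^{−2R1}·(P+1) then G is monotonically nondecreasing on [0, 1]. -/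
open MeasureTheory

/-- Monotonicity of `G(α)` (the argument of the logarithm in the Gaussian pDCF
rate): the denominator is strictly positive on `[0,1]`; `G` is nonincreasing on
`[0,1]` if `ρ² ≥ 2^{−2R1}(P+1)` and nondecreasing if `ρ² < 2^{−2R1}(P+1)`. -/
theorem stmt7 (P R1 ρ : ℝ) (hP : 0 < P) (hR1 : 0 ≤ R1) (hρ : ρ ∈ Set.Ico (0 : ℝ) 1)
    (D G : ℝ → ℝ)
    (hD : D = fun α =>
      (1 - ρ ^ 2) * (2 : ℝ) ^ (2 * R1) * (1 + (1 - α) * P) + (1 - α) * P * (1 + P))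
    (hG : G = fun α =>
      (2 : ℝ) ^ (2 * R1) * (1 + P) * (1 - ρ ^ 2 + (1 - α) * P) / D α) :
    (∀ α ∈ Set.Icc (0 : ℝ) 1, 0 < D α) ∧
    (ρ ^ 2 ≥ (2 : ℝ) ^ (-(2 * R1)) * (P + 1) → AntitoneOn G (Set.Icc (0 : ℝ) 1)) ∧
    (ρ ^ 2 < (2 : ℝ) ^ (-(2 * R1)) * (P + 1) → MonotoneOn G (Set.Icc (0 : ℝ) 1)) := by
  obtain ⟨hρ0, hρ1⟩ := hρ
  set E : ℝ := (2 : ℝ) ^ (2 * R1) with hEdef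
  have hE : 0 < E := Real.rpow_pos_of_pos (by norm_num) _
  have hEneg : (2 : ℝ) ^ (-(2 * R1)) = E⁻¹ := Real.rpow_neg (by norm_num) _
  have hc : 0 < 1 - ρ ^ 2 := by nlinarith
  have hDpos : ∀ α ∈ Set.Icc (0 : ℝ) 1, 0 < D α := by
    intro α hα
    obtain ⟨h0, h1⟩ := hα
    rw [hD]
    simp only
    have h1α : 0 ≤ 1 - α := by linarith
    have : 0 < 1 + (1 - α) * P := by nlinarith
    have h2 : 0 < (1 - ρ ^ 2) * E * (1 + (1 - α) * P) := by positivity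
    have h3 : 0 ≤ (1 - α) * P * (1 + P) := by positivity
    linarith
  refine ⟨hDpos, ?_, ?_⟩
  · intro hcond x hx y hy hxy
    have hcond' : P + 1 ≤ E * ρ ^ 2 := by
      rw [hEneg, inv_mul_eq_div, ge_iff_le, div_le_iff₀ hE] at hcond
      linarith [hcond]
    have hDx := hDpos x hx
    have hDy := hDpos y hy
    rw [hG]
    simp only
    rw [div_le_div_iff₀ (hDpos y hy) (hDpos x hx)]
    have key : E * (1 + P) * (1 - ρ ^ 2 + (1 - x) * P) * D y
        - E * (1 + P) * (1 - ρ ^ 2 + (1 - y) * P) * D x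
        = (y - x) * (E * (1 + P) * (1 - ρ ^ 2) * P * (E * ρ ^ 2 - (P + 1))) := by
      rw [hD]; ring
    have hfac : 0 ≤ (y - x) * (E * (1 + P) * (1 - ρ ^ 2) * P * (E * ρ ^ 2 - (P + 1))) := by
      apply mul_nonneg (by linarith)
      have : 0 ≤ E * ρ ^ 2 - (P + 1) := by linarith
      positivity
    linarith [key, hfac]
  · intro hcond x hx y hy hxy
    have hcond' : E * ρ ^ 2 ≤ P + 1 := by
      rw [hEneg, inv_mul_eq_div, lt_div_iff₀ hE] at hcond
      nlinarith
    have hDx := hDpos x hx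
    have hDy := hDpos y hy
    rw [hG]
    simp only
    rw [div_le_div_iff₀ (hDpos x hx) (hDpos y hy)]
    have key : E * (1 + P) * (1 - ρ ^ 2 + (1 - y) * P) * D x
        - E * (1 + P) * (1 - ρ ^ 2 + (1 - x) * P) * D y
        = (y - x) * (E * (1 + P) * (1 - ρ ^ 2) * P * ((P + 1) - E * ρ ^ 2)) := by
      rw [hD]; ring
    have hfac : 0 ≤ (y - x) * (E * (1 + P) * (1 - ρ ^ 2) * P * ((P + 1) - E * ρ ^ 2)) := by
      apply mul_nonneg (by linarith)
      have : 0 ≤ (P + 1) - E * ρ ^ 2 := by linarith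
      positivity
    linarith [key, hfac]
end

section
/- Let P > 0, R1 ≥ 0 and ρ ∈ [0, 1], and define R_DF = min{R1, (1/2)·log₂(1+P)} and R_CF = R1 − (1/2)·log₂( (P + 2^{2R1}·(1−ρ²)) / (P + 1 − ρ²) ). If ρ² ≤ 2^{−2R1}·(1+P) then max{R_DF, R_CF} = R_DF, and if ρ² > 2^{−2R1}·(1+P) then max{R_DF, R_CF} = R_CF. (In the multihop Gaussian relay channel with state known at the destination, the best of the Gaussian decode-and-forward and compress-and-forward rates equals the decode-and-forward rate when ρ² ≤ 2^{−2R1}(1+P) and the compress-and-forward rate otherwise.) -/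
open MeasureTheory

/-- Gaussian multihop relay channel: the best of the Gaussian DF and CF rates
equals the DF rate when `ρ² ≤ 2^{−2R1}(1+P)` and the CF rate otherwise. -/
theorem stmt8 (P R1 ρ : ℝ) (hP : 0 < P) (hR1 : 0 ≤ R1) (hρ : ρ ∈ Set.Icc (0 : ℝ) 1)
    (RDF RCF : ℝ)
    (hDF : RDF = min R1 (1 / 2 * Real.logb 2 (1 + P)))
    (hCF : RCF = R1 - 1 / 2 *
      Real.logb 2 ((P + (2 : ℝ) ^ (2 * R1) * (1 - ρ ^ 2)) / (P + 1 - ρ ^ 2))) :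
    (ρ ^ 2 ≤ (2 : ℝ) ^ (-(2 * R1)) * (1 + P) → max RDF RCF = RDF) ∧
    ((2 : ℝ) ^ (-(2 * R1)) * (1 + P) < ρ ^ 2 → max RDF RCF = RCF) := by
  obtain ⟨hρ0, hρ1⟩ := hρ
  have hρ2 : ρ ^ 2 ≤ 1 := by nlinarith
  set t : ℝ := (2 : ℝ) ^ (2 * R1) with htdef
  have ht0 : 0 < t := Real.rpow_pos_of_pos two_pos _
  have ht1 : 1 ≤ t := Real.one_le_rpow one_le_two (by positivity)
  set A : ℝ := P + t * (1 - ρ ^ 2) with hAdef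
  set B : ℝ := P + 1 - ρ ^ 2 with hBdef
  have hB : 0 < B := by simp only [hBdef]; nlinarith
  have hAB : B ≤ A := by
    have : 0 ≤ (t - 1) * (1 - ρ ^ 2) := mul_nonneg (by linarith) (by nlinarith)
    simp only [hAdef, hBdef]; nlinarith
  have hA : 0 < A := lt_of_lt_of_le hB hAB
  have hneg : ((2 : ℝ) ^ (-(2 * R1)) : ℝ) = t⁻¹ := by
    rw [htdef, ← Real.rpow_neg (by norm_num)]
  have hR1t : R1 = 1 / 2 * Real.logb 2 t := by
    rw [htdef, Real.logb_rpow (by norm_num) (by norm_num)]; ring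
  have hlogdiv : Real.logb 2 (A / B) = Real.logb 2 A - Real.logb 2 B :=
    Real.logb_div hA.ne' hB.ne'
  have hlogmul : Real.logb 2 (A * (1 + P) / B) =
      Real.logb 2 A + Real.logb 2 (1 + P) - Real.logb 2 B := by
    rw [Real.logb_div (by positivity) hB.ne', Real.logb_mul hA.ne' (by positivity)]
  constructor
  · intro hcond
    rw [hneg] at hcond
    have h1 : t * ρ ^ 2 ≤ 1 + P := by
      have := mul_le_mul_of_nonneg_left hcond ht0.le
      rwa [mul_inv_cancel_left₀ ht0.ne'] at this
    have hle1 : RCF ≤ R1 := by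
      have : (0:ℝ) ≤ Real.logb 2 (A / B) :=
        Real.logb_nonneg one_lt_two ((one_le_div hB).2 hAB)
      rw [hCF]; linarith
    have hle2 : RCF ≤ 1 / 2 * Real.logb 2 (1 + P) := by
      have harith : t ≤ A * (1 + P) / B := by
        rw [le_div_iff₀ hB]
        simp only [hAdef, hBdef]; nlinarith
      have := Real.logb_le_logb_of_le one_lt_two ht0 harith
      rw [hlogmul] at this
      rw [hCF, hR1t, hlogdiv]; linarith
    rw [max_eq_left (hDF ▸ le_min hle1 hle2)]
  · intro hcond
    rw [hneg] at hcond
    have h1 : 1 + P ≤ t * ρ ^ 2 := by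
      have := mul_le_mul_of_nonneg_left hcond.le ht0.le
      rw [mul_inv_cancel_left₀ ht0.ne'] at this
      linarith
    have htP : 1 + P ≤ t := by nlinarith
    have hLR : 1 / 2 * Real.logb 2 (1 + P) ≤ R1 := by
      have := Real.logb_le_logb_of_le one_lt_two (by positivity) htP
      rw [hR1t]; linarith
    have hDF' : RDF = 1 / 2 * Real.logb 2 (1 + P) := by
      rw [hDF, min_eq_right hLR]
    have hge : RDF ≤ RCF := by
      have harith : A * (1 + P) / B ≤ t := by
        rw [div_le_iff₀ hB]
        simp only [hAdef, hBdef]; nlinarith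
      have := Real.logb_le_logb_of_le one_lt_two (by positivity) harith
      rw [hlogmul] at this
      rw [hDF', hCF, hR1t, hlogdiv]; linarith
    rw [max_eq_right hge]
end
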